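/- Let n ≥ 1 and let a be an n×n complex Hermitian matrix. Then a is positive semidefinite if and only if Re(trace(ab)) ≥ 0 for every positive semidefinite n×n complex matrix b. That is, the cone of positive semidefinite Hermitian matrices is self-dual with respect to the trace inner product on Hermitian matrices. -/

import Mathlib

/-!
If `b = cᴴ * c`, then `tr (a * b) = tr (c * a * cᴴ)`, the trace of a positive semidefinite
matrix. Conversely, testing against the rank-one matrix `x * xᴴ` gives
`tr (a * x * xᴴ) = xᴴ * a * x`, the quadratic form of `a` at `x`.
-/

open Matrix
open scoped ComplexOrder

namespace Matrix

variable {ι 𝕜 : Type*} [Fintype ι] [RCLike 𝕜]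

theorem PosSemidef.trace_mul_nonneg {A B : Matrix ι ι 𝕜} (hA : A.PosSemidef)
    (hB : B.PosSemidef) : 0 ≤ (A * B).trace := by
  classical
  open scoped MatrixOrder in
  obtain ⟨C, rfl⟩ := CStarAlgebra.nonneg_iff_eq_star_mul_self.mp hB.nonneg
  rw [← Matrix.mul_assoc, trace_mul_comm, ← Matrix.mul_assoc]
  exact (hA.mul_mul_conjTranspose_same C).trace_nonneg

theorem trace_mul_vecMulVec_star (A : Matrix ι ι 𝕜) (x : ι → 𝕜) :
    (A * vecMulVec x (star x)).trace = star x ⬝ᵥ (A *ᵥ x) := by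
  rw [mul_vecMulVec, trace_vecMulVec, dotProduct_comm]

theorem IsHermitian.posSemidef_iff_forall_re_trace_mul_nonneg {A : Matrix ι ι 𝕜}
    (hA : A.IsHermitian) :
    A.PosSemidef ↔ ∀ B : Matrix ι ι 𝕜, B.PosSemidef → 0 ≤ RCLike.re (A * B).trace := by
  refine ⟨fun hA' B hB ↦ (RCLike.nonneg_iff.mp (hA'.trace_mul_nonneg hB)).1, fun h ↦ ?_⟩
  refine .of_dotProduct_mulVec_nonneg hA fun x ↦ RCLike.nonneg_iff.mpr ⟨?_, ?_⟩
  · simpa [trace_mul_vecMulVec_star] using h _ (posSemidef_vecMulVec_self_star x)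
  · exact hA.im_star_dotProduct_mulVec_self x

end Matrix

theorem statement12_general (n : ℕ) (a : Matrix (Fin n) (Fin n) ℂ)
    (ha : aᴴ = a) :
    a.PosSemidef ↔
      ∀ b : Matrix (Fin n) (Fin n) ℂ, b.PosSemidef → 0 ≤ ((a * b).trace).re :=
  IsHermitian.posSemidef_iff_forall_re_trace_mul_nonneg ha

/-- A Hermitian matrix `a` is positive semidefinite iff
`Re(tr(ab)) ≥ 0` for every positive semidefinite `b`: the positive semidefinite cone is
self-dual with respect to the trace inner product on Hermitian matrices. -/
theorem statement12 (n : ℕ) (hn : 1 ≤ n) (a : Matrix (Fin n) (Fin n) ℂ)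
    (ha : aᴴ = a) :
    a.PosSemidef ↔
      ∀ b : Matrix (Fin n) (Fin n) ℂ, b.PosSemidef → 0 ≤ ((a * b).trace).re :=
  statement12_general n a ha
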